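/- (Comparison principle for the thin obstacle problem.) Let R>0 and let u and Q be solutions to the thin obstacle problem in B_R⊂ℝ², both extending continuously to the closed ball of radius R, with u ≤ Q on ∂B_R. Then u ≤ Q everywhere in B_R. -/

import Mathlib

/-!
Let `M` be the maximum of `u - Q` on the closed disc and suppose `M > 0`. By the boundary
condition it is attained inside. At any interior point where `u - Q = M` we have `u > Q`, and
on the axis `Q ≥ 0`, so the point is off the contact set of `u`; hence `u` is harmonic there
while `Q` is superharmonic, `u - Q` has the sub-mean-value property on small circles, and the
maximum spreads to a neighbourhood. The level set `{u - Q = M}` is then open and closed in the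
disc, so `u - Q = M` up to the boundary, contradicting `u ≤ Q` there.
-/

noncomputable section

open Complex MeasureTheory Metric

/-- The function `u_s = r^s · cos(s·θ)` in polar coordinates, where `r = |z|` and
`θ = arg z ∈ (−π, π]`.  (It takes the value `0` at the origin.) -/
def us (s : ℝ) (z : ℂ) : ℝ := ‖z‖ ^ s * Real.cos (s * Complex.arg z)

/-- The average of `u` over the circle `∂B_ρ(y)`. -/
def circAvg (u : ℂ → ℝ) (y : ℂ) (ρ : ℝ) : ℝ :=
  (2 * Real.pi)⁻¹ * ∫ t in (0:ℝ)..(2 * Real.pi), u (y + (ρ : ℂ) * Complex.exp ((t : ℂ) * Complex.I))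

/-- Mean-value characterization of harmonicity of a continuous function on a set `A`:
the value at a point equals the average over every circle whose closed disc lies in `A`. -/
def IsHarmOn (u : ℂ → ℝ) (A : Set ℂ) : Prop :=
  ContinuousOn u A ∧
    ∀ y : ℂ, ∀ ρ : ℝ, 0 < ρ → closedBall y ρ ⊆ A → circAvg u y ρ = u y

/-- The slit `S = {(x₁, 0) : x₁ ≤ 0}`. -/
def Slit : Set ℂ := {z : ℂ | z.im = 0 ∧ z.re ≤ 0}

/-- A solution to the thin obstacle problem in `Ω`: continuous, even in `x₂`,
superharmonic (mean-value form), nonnegative on `{x₂ = 0}`, and harmonic away from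
the contact set `{(x₁,0) : u(x₁,0) = 0}`. -/
def IsTOS (u : ℂ → ℝ) (Ω : Set ℂ) : Prop :=
  ContinuousOn u Ω ∧
    (∀ z ∈ Ω, (starRingEnd ℂ) z ∈ Ω → u ((starRingEnd ℂ) z) = u z) ∧
    (∀ y : ℂ, ∀ ρ : ℝ, 0 < ρ → closedBall y ρ ⊆ Ω → circAvg u y ρ ≤ u y) ∧
    (∀ z ∈ Ω, z.im = 0 → 0 ≤ u z) ∧
    IsHarmOn u (Ω \ {z : ℂ | z.im = 0 ∧ u z = 0})

/-- A solution to the thin obstacle problem in all of `ℝ²`: a solution in `B_R` for all `R > 0`. -/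
def IsTOSR2 (u : ℂ → ℝ) : Prop := ∀ R : ℝ, 0 < R → IsTOS u (ball 0 R)

/-- The data `p = u_{2k−1/2} + Σ_{l=1}^{2k−1} a_l · u_{2k−1/2−l}`. -/
def pData (k : ℕ) (a : ℕ → ℝ) (z : ℂ) : ℝ :=
  us (2 * (k:ℝ) - 1/2) z +
    ∑ l ∈ Finset.Icc 1 (2*k-1), a l * us (2 * (k:ℝ) - 1/2 - (l:ℝ)) z

/-- `u` is a solution to the thin obstacle problem in `ℝ²` with data `p` at infinity. -/
def SolWithData (u p : ℂ → ℝ) : Prop :=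
  IsTOSR2 u ∧ ∃ C : ℝ, ∀ z : ℂ, |u z - p z| ≤ C

open Real Set Filter Topology

theorem Real.circleAverage_lt_of_le_of_exists_lt {f : ℂ → ℝ} {c : ℂ} {R a : ℝ}
    (hf : ContinuousOn f (sphere c |R|)) (hle : ∀ x ∈ sphere c |R|, f x ≤ a)
    (hlt : ∃ x ∈ sphere c |R|, f x < a) : circleAverage f c R < a := by
  obtain ⟨x, hx, hxa⟩ := hlt
  rw [← range_circleMap, ← (periodic_circleMap c R).image_Icc two_pi_pos 0, zero_add] at hx
  obtain ⟨θ, hθ, rfl⟩ := hx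
  have hcont : Continuous fun t ↦ f (circleMap c R t) :=
    hf.comp_continuous (continuous_circleMap c R) (circleMap_mem_sphere' c R)
  rw [← circleAverage_const a c R, circleAverage, circleAverage, smul_eq_mul, smul_eq_mul,
    mul_lt_mul_iff_of_pos_left (inv_pos.2 two_pi_pos)]
  exact intervalIntegral.integral_lt_integral_of_continuousOn_of_le_of_exists_lt two_pi_pos
    hcont.continuousOn continuousOn_const
    (fun t _ ↦ hle _ (circleMap_mem_sphere' c R t)) ⟨θ, hθ, hxa⟩

theorem Real.eqOn_sphere_of_le_of_le_circleAverage {f : ℂ → ℝ} {c : ℂ} {R a : ℝ}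
    (hf : ContinuousOn f (sphere c |R|)) (hle : ∀ x ∈ sphere c |R|, f x ≤ a)
    (havg : a ≤ circleAverage f c R) : EqOn f (fun _ ↦ a) (sphere c |R|) := by
  by_contra! h
  obtain ⟨x, hx, hne⟩ : ∃ x ∈ sphere c |R|, f x ≠ a := by simpa [EqOn] using h
  exact havg.not_gt
    (circleAverage_lt_of_le_of_exists_lt hf hle ⟨x, hx, (hle x hx).lt_of_ne hne⟩)

theorem eqOn_closedBall_of_isOpen_ball_inter_preimage {E : Type*} [NormedAddCommGroup E]
    [NormedSpace ℝ E] {f : E → ℝ} {c : E} {R M : ℝ} (hR : R ≠ 0)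
    (hf : ContinuousOn f (closedBall c R)) (hopen : IsOpen (ball c R ∩ f ⁻¹' {M}))
    (hne : (ball c R ∩ f ⁻¹' {M}).Nonempty) : EqOn f (fun _ ↦ M) (closedBall c R) := by
  have hclosed : IsClosed (closedBall c R ∩ f ⁻¹' {M}) :=
    hf.preimage_isClosed_of_isClosed isClosed_closedBall isClosed_singleton
  have hclosure : closure (ball c R ∩ f ⁻¹' {M}) ⊆ closedBall c R ∩ f ⁻¹' {M} :=
    closure_minimal (inter_subset_inter_left _ ball_subset_closedBall) hclosed
  have hball : ball c R ⊆ ball c R ∩ f ⁻¹' {M} :=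
    (convex_ball c R).isPreconnected.subset_of_closure_inter_subset hopen
      (by rwa [← inter_assoc, inter_self]) fun x ⟨hx, hxR⟩ ↦ ⟨hxR, (hclosure hx).2⟩
  intro x hx
  rw [← closure_ball c hR] at hx
  exact (hclosure (closure_mono hball hx)).2

theorem circAvg_eq_circleAverage (u : ℂ → ℝ) (y : ℂ) (ρ : ℝ) :
    circAvg u y ρ = circleAverage u y ρ := rfl

theorem IsTOS.eventually_sub_eq_of_isMaxOn {u Q : ℂ → ℝ} {Ω : Set ℂ} {z : ℂ}
    (hΩ : IsOpen Ω) (hu : IsTOS u Ω) (hQ : IsTOS Q Ω) (hz : z ∈ Ω) (hmax : IsMaxOn (u - Q) Ω z)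
    (hpos : Q z < u z) : ∀ᶠ w in 𝓝 z, (u - Q) w = (u - Q) z := by
  obtain ⟨huc, -, -, -, -, huH⟩ := hu
  obtain ⟨hQc, -, hQsup, hQnn, -⟩ := hQ
  have hΩz : ∀ᶠ w in 𝓝 z, w ∈ Ω := hΩ.mem_nhds hz
  have hfree : ∀ᶠ w in 𝓝 z, w ∈ Ω \ {w | w.im = 0 ∧ u w = 0} := by
    by_cases him : z.im = 0
    · have hu0 : ∀ᶠ w in 𝓝 z, 0 < u w :=
        (huc.continuousAt hΩz).eventually (lt_mem_nhds ((hQnn z hz him).trans_lt hpos))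
      filter_upwards [hΩz, hu0] with w hw hw0 using ⟨hw, fun h ↦ hw0.ne' h.2⟩
    · filter_upwards [hΩz, continuous_im.continuousAt.eventually_ne him] with w hw hwim
        using ⟨hw, fun h ↦ hwim h.1⟩
  obtain ⟨ε, hε, hfreeε⟩ := Metric.eventually_nhds_iff_ball.1 hfree
  filter_upwards [ball_mem_nhds z hε] with w hw
  rcases (dist_nonneg (x := w) (y := z)).eq_or_lt with hρ | hρ
  · rw [dist_eq_zero.1 hρ.symm]
  set ρ := dist w z
  have hsub : closedBall z ρ ⊆ Ω \ {w | w.im = 0 ∧ u w = 0} :=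
    fun y hy ↦ hfreeε y (closedBall_subset_ball hw hy)
  have hsphere : sphere z |ρ| ⊆ Ω := by
    rw [abs_of_pos hρ]; exact sphere_subset_closedBall.trans (hsub.trans sdiff_subset)
  have hint {g : ℂ → ℝ} (hg : ContinuousOn g Ω) : CircleIntegrable g z ρ :=
    (hg.mono hsphere).circleIntegrable'
  have havg : (u - Q) z ≤ circleAverage (u - Q) z ρ := by
    have hu_avg := huH z ρ hρ hsub
    have hQ_avg := hQsup z ρ hρ (hsub.trans sdiff_subset)
    rw [circAvg_eq_circleAverage] at hu_avg hQ_avg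
    rw [circleAverage_sub (hint huc) (hint hQc), Pi.sub_apply]
    linarith
  refine Real.eqOn_sphere_of_le_of_le_circleAverage ((huc.sub hQc).mono hsphere)
    (fun x hx ↦ hmax (hsphere hx)) havg ?_
  rw [abs_of_pos hρ]
  exact mem_sphere.2 rfl

/-- Comparison principle for the thin obstacle problem in a ball. -/
theorem statement15 (R : ℝ) (hR : 0 < R) (u Q : ℂ → ℝ)
    (hu : IsTOS u (ball 0 R)) (hQ : IsTOS Q (ball 0 R))
    (huc : ContinuousOn u (closedBall 0 R)) (hQc : ContinuousOn Q (closedBall 0 R))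
    (hbd : ∀ z ∈ sphere (0:ℂ) R, u z ≤ Q z) :
    ∀ z ∈ ball (0:ℂ) R, u z ≤ Q z := by
  obtain ⟨x₀, hx₀, hmax⟩ := (isCompact_closedBall (0 : ℂ) R).exists_isMaxOn
    (nonempty_closedBall.2 hR.le) (huc.sub hQc)
  intro z hz
  by_contra! hzQ
  set M := (u - Q) x₀
  have hM : 0 < M := (sub_pos.2 hzQ).trans_le (hmax (ball_subset_closedBall hz))
  have hx₀ball : x₀ ∈ ball (0 : ℂ) R := (mem_closedBall.1 hx₀).lt_of_ne fun h ↦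
    hM.not_ge (sub_nonpos.2 (hbd x₀ (mem_sphere.2 h)))
  have hopen : IsOpen (ball (0 : ℂ) R ∩ (u - Q) ⁻¹' {M}) := by
    refine isOpen_iff_mem_nhds.2 fun w ⟨hw, hwM⟩ ↦ inter_mem (isOpen_ball.mem_nhds hw) ?_
    have hwmax : IsMaxOn (u - Q) (ball 0 R) w :=
      fun y hy ↦ hwM ▸ hmax (ball_subset_closedBall hy)
    have hwpos : Q w < u w := sub_pos.1 (hwM ▸ hM : 0 < (u - Q) w)
    filter_upwards [hu.eventually_sub_eq_of_isMaxOn isOpen_ball hQ hw hwmax hwpos]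
      with y hy using hy.trans hwM
  obtain ⟨p, hp⟩ := (NormedSpace.sphere_nonempty (x := (0 : ℂ))).2 hR.le
  have hpM : (u - Q) p = M :=
    eqOn_closedBall_of_isOpen_ball_inter_preimage hR.ne' (huc.sub hQc) hopen ⟨x₀, hx₀ball, rfl⟩
      (sphere_subset_closedBall hp)
  have hp_le : (u - Q) p ≤ 0 := sub_nonpos.2 (hbd p hp)
  exact hM.not_ge (hpM ▸ hp_le)
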